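/- Let p ∈ (0,1), α = 1/p−1, d = ⌊nα⌋. If f ∈ L_loc^{Φ_p,1,d}(ℝⁿ) then f ∈ L_loc^{α,1,d}(ℝⁿ) with ‖f‖_{L_loc^{α,1,d}} ≲ ‖f‖_{L_loc^{Φ_p,1,d}}; conversely, using the identification L_loc^{α,1,d}(ℝⁿ) = Λ_{nα}(ℝⁿ) (so elements are bounded), if f ∈ L_loc^{α,1,d}(ℝⁿ) then f ∈ L_loc^{Φ_p,1,d}(ℝⁿ) with ‖f‖_{L_loc^{Φ_p,1,d}} ≲ ‖f‖_{L_loc^{α,1,d}}. Hence the two spaces coincide with equivalent norms. -/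

import Mathlib

/-!
On a ball `B` one has `‖1_B‖_{L^{Φ_p}} ≍ min(|B|, |B|^{1/p})`, because `Φ_p(τ) ≍ min(τ, τ^p)`.
So on balls with `|B| < 1` the two normalizations agree up to `2^{1/p}`, while on balls with
`|B| ≥ 1` the Orlicz one is `|B| ≤ |B|^{1/p}`. Hence only the large balls need an argument in the
direction `L^{α,1,d}_loc ⊆ L^{Φ_p,1,d}_loc`: there `∫_B |f| ≲ |B|` follows from the bound
`∫_{B(y,ρ)} |f| ≤ K` on the balls of volume one by averaging over their centres,
`∫_{B(x₀,r)} |f| = ∫_{B(x₀,r)} |f(x)| |B(x,ρ)| dx = ∫ ∫_{B(x₀,r) ∩ B(y,ρ)} |f| dy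
  ≤ K |B(x₀,r+ρ)| ≤ 2ⁿ K |B(x₀,r)|`.
-/

open MeasureTheory

/-- The Orlicz function `Φ_p(τ) = τ / (1 + τ^(1-p))`. -/
noncomputable def PhiP (p τ : ℝ) : ℝ := τ / (1 + τ ^ (1 - p))

/-- The Luxemburg quasi-norm with respect to `Φ_p` on `ℝⁿ`. -/
noncomputable def luxNorm (n : ℕ) (p : ℝ) (f : EuclideanSpace ℝ (Fin n) → ℝ) : ℝ :=
  sInf {lam : ℝ | 0 < lam ∧ ∫ x, PhiP p (|f x| / lam) ≤ 1}

/-- Evaluation of a real polynomial in `n` variables at a point of `ℝⁿ`. -/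
noncomputable def mvEval {n : ℕ} (x : EuclideanSpace ℝ (Fin n))
    (P : MvPolynomial (Fin n) ℝ) : ℝ :=
  MvPolynomial.eval (fun i => x i) P

/-- `P` is the minimizing polynomial `P_B^d g` of degree `≤ d` of `g` on the ball `B(x₀,r)`. -/
def IsMinPoly (n : ℕ) (d : ℕ) (x₀ : EuclideanSpace ℝ (Fin n)) (r : ℝ)
    (g : EuclideanSpace ℝ (Fin n) → ℝ) (P : MvPolynomial (Fin n) ℝ) : Prop :=
  P.totalDegree ≤ d ∧
  ∀ R : MvPolynomial (Fin n) ℝ, R.totalDegree ≤ d →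
    ∫ x in Metric.ball x₀ r, (g x - mvEval x P) * mvEval x R = 0

/-- `f ∈ L_loc^{α,1,d}(ℝⁿ)` with norm bound `K`, where `α = 1/p − 1`, `d = ⌊nα⌋`
(normalization `|B|^{α+1} = |B|^{1/p}`). -/
def CampBound (n : ℕ) (p K : ℝ) (f : EuclideanSpace ℝ (Fin n) → ℝ) : Prop :=
  (∀ (x₀ : EuclideanSpace ℝ (Fin n)) (r : ℝ), 0 < r →
    (volume (Metric.ball x₀ r)).toReal < 1 →
    ∀ P : MvPolynomial (Fin n) ℝ, IsMinPoly n ⌊(n : ℝ) * (1 / p - 1)⌋₊ x₀ r f P →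
      ∫ x in Metric.ball x₀ r, |f x - mvEval x P| ≤
        K * (volume (Metric.ball x₀ r)).toReal ^ (1 / p)) ∧
  (∀ (x₀ : EuclideanSpace ℝ (Fin n)) (r : ℝ), 0 < r →
    1 ≤ (volume (Metric.ball x₀ r)).toReal →
    ∫ x in Metric.ball x₀ r, |f x| ≤
      K * (volume (Metric.ball x₀ r)).toReal ^ (1 / p))

/-- `f ∈ L_loc^{Φ_p,1,d}(ℝⁿ)` with norm bound `K`, `d = ⌊n(1/p−1)⌋`
(normalization `‖1_B‖_{L^{Φ_p}}`). -/
def OrlCampBound (n : ℕ) (p K : ℝ) (f : EuclideanSpace ℝ (Fin n) → ℝ) : Prop :=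
  (∀ (x₀ : EuclideanSpace ℝ (Fin n)) (r : ℝ), 0 < r →
    (volume (Metric.ball x₀ r)).toReal < 1 →
    ∀ P : MvPolynomial (Fin n) ℝ, IsMinPoly n ⌊(n : ℝ) * (1 / p - 1)⌋₊ x₀ r f P →
      ∫ x in Metric.ball x₀ r, |f x - mvEval x P| ≤
        K * luxNorm n p ((Metric.ball x₀ r).indicator fun _ => (1 : ℝ))) ∧
  (∀ (x₀ : EuclideanSpace ℝ (Fin n)) (r : ℝ), 0 < r →
    1 ≤ (volume (Metric.ball x₀ r)).toReal →
    ∫ x in Metric.ball x₀ r, |f x| ≤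
      K * luxNorm n p ((Metric.ball x₀ r).indicator fun _ => (1 : ℝ)))

open Measure Metric Module
open scoped ENNReal

section Averaging

variable {X : Type*} [PseudoMetricSpace X] [MeasurableSpace X] [OpensMeasurableSpace X]
  [SecondCountableTopology X] (μ : Measure X) [SFinite μ]

theorem setLIntegral_ball_mul_measure_ball_le {g : X → ℝ≥0∞} (hg : AEMeasurable g μ) {ρ : ℝ}
    {K : ℝ≥0∞} (hK : ∀ y, ∫⁻ x in ball y ρ, g x ∂μ ≤ K) (x₀ : X) (r : ℝ) :
    ∫⁻ x in ball x₀ r, g x * μ (ball x ρ) ∂μ ≤ K * μ (ball x₀ (r + ρ)) := by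
  set F : X → X → ℝ≥0∞ := fun x y => (ball y ρ).indicator g x
  have hF : AEMeasurable (Function.uncurry F) ((μ.restrict (ball x₀ r)).prod μ) := by
    have : Function.uncurry F = {q : X × X | dist q.1 q.2 < ρ}.indicator (fun q => g q.1) := by
      ext ⟨x, y⟩; simp [F, Set.indicator, mem_ball]
    rw [this]
    exact hg.restrict.comp_fst.indicator (measurableSet_lt measurable_dist measurable_const)
  have hfiber : ∀ y, ∫⁻ x in ball x₀ r, F x y ∂μ ≤ (ball x₀ (r + ρ)).indicator (fun _ => K) y := by
    intro y
    rw [lintegral_indicator measurableSet_ball]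
    by_cases hy : y ∈ ball x₀ (r + ρ)
    · rw [Set.indicator_of_mem hy]
      exact (lintegral_mono' (Measure.restrict_mono le_rfl Measure.restrict_le_self) le_rfl).trans
        (hK y)
    · have hdisj : Disjoint (ball y ρ) (ball x₀ r) :=
        ball_disjoint_ball (by rw [mem_ball, not_lt] at hy; linarith)
      rw [Measure.restrict_restrict measurableSet_ball, hdisj.inter_eq, Measure.restrict_empty,
        lintegral_zero_measure]
      exact zero_le
  calc ∫⁻ x in ball x₀ r, g x * μ (ball x ρ) ∂μ
      = ∫⁻ x in ball x₀ r, ∫⁻ y, F x y ∂μ ∂μ := by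
        refine lintegral_congr fun x => ?_
        have : ∀ y, F x y = (ball x ρ).indicator (fun _ => g x) y := fun y => by
          simp only [F, Set.indicator, mem_ball, dist_comm]
        simp_rw [this, lintegral_indicator_const measurableSet_ball]
    _ = ∫⁻ y, ∫⁻ x in ball x₀ r, F x y ∂μ ∂μ := lintegral_lintegral_swap hF
    _ ≤ ∫⁻ y, (ball x₀ (r + ρ)).indicator (fun _ => K) y ∂μ := lintegral_mono hfiber
    _ = K * μ (ball x₀ (r + ρ)) := lintegral_indicator_const measurableSet_ball K

end Averaging

theorem measureReal_ball_pos {X : Type*} [PseudoMetricSpace X] [ProperSpace X] [MeasurableSpace X]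
    (μ : Measure X) [IsOpenPosMeasure μ] [IsFiniteMeasureOnCompacts μ] (x : X) {r : ℝ}
    (hr : 0 < r) : 0 < μ.real (ball x r) :=
  ENNReal.toReal_pos (measure_ball_pos μ x hr).ne' measure_ball_lt_top.ne

section AddHaar

variable {E : Type*} [NormedAddCommGroup E] [NormedSpace ℝ E] [FiniteDimensional ℝ E]
  [MeasurableSpace E] [BorelSpace E] (μ : Measure E) [IsAddHaarMeasure μ]

theorem exists_pos_radius_measure_ball_eq_one [Nontrivial E] :
    ∃ ρ > 0, ∀ x : E, μ (ball x ρ) = 1 := by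
  set c := μ (ball (0 : E) 1)
  have hc0 : 0 < c.toReal := measureReal_ball_pos μ 0 one_pos
  have hd : finrank ℝ E ≠ 0 := finrank_pos.ne'
  refine ⟨(c.toReal⁻¹) ^ ((finrank ℝ E : ℝ)⁻¹), by positivity, fun x => ?_⟩
  rw [addHaar_ball_of_pos μ x (by positivity), Real.rpow_inv_natCast_pow (by positivity) hd,
    ENNReal.ofReal_inv_of_pos hc0, ENNReal.ofReal_toReal measure_ball_lt_top.ne,
    ENNReal.inv_mul_cancel (measure_ball_pos μ 0 one_pos).ne' measure_ball_lt_top.ne]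

theorem le_of_one_le_measure_ball [Nontrivial E] {ρ : ℝ} (hρ : 0 < ρ)
    (hρ1 : ∀ x : E, μ (ball x ρ) = 1) {x₀ : E} {r : ℝ} (hr : 1 ≤ μ (ball x₀ r)) : ρ ≤ r := by
  by_contra! hrρ
  rcases le_or_gt r 0 with hr0 | hr0
  · simp [ball_eq_empty.mpr hr0] at hr
  · have hlt : (r / ρ) ^ finrank ℝ E < 1 :=
      pow_lt_one₀ (by positivity) ((div_lt_one hρ).mpr hrρ) finrank_pos.ne'
    have : μ (ball x₀ r) < 1 := by
      rw [show r = r / ρ * ρ by field_simp, addHaar_ball_mul_of_pos μ x₀ (by positivity),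
        ← addHaar_ball_center μ x₀, hρ1, mul_one, ENNReal.ofReal_lt_one]
      exact hlt
    exact absurd hr (not_le.mpr this)

theorem measure_ball_add_le_two_pow_mul {ρ r : ℝ} (hρr : ρ ≤ r) (x : E) :
    μ (ball x (r + ρ)) ≤ 2 ^ finrank ℝ E * μ (ball x r) := by
  rcases le_or_gt r 0 with hr0 | hr0
  · rw [ball_eq_empty.mpr (by linarith)]
    simp
  calc μ (ball x (r + ρ)) ≤ μ (ball x (2 * r)) := measure_mono (ball_subset_ball (by linarith))
    _ = 2 ^ finrank ℝ E * μ (ball x r) := by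
      rw [addHaar_ball_mul_of_pos μ x two_pos, ← addHaar_ball_center μ x,
        ENNReal.ofReal_pow zero_le_two, ENNReal.ofReal_ofNat]

theorem setLIntegral_ball_le_of_unit_balls [Nontrivial E] {g : E → ℝ≥0∞} (hg : AEMeasurable g μ)
    {ρ : ℝ} (hρ : 0 < ρ) (hρ1 : ∀ x : E, μ (ball x ρ) = 1) {K : ℝ≥0∞}
    (hK : ∀ y, ∫⁻ x in ball y ρ, g x ∂μ ≤ K) {x₀ : E} {r : ℝ} (hr : 1 ≤ μ (ball x₀ r)) :
    ∫⁻ x in ball x₀ r, g x ∂μ ≤ 2 ^ finrank ℝ E * K * μ (ball x₀ r) :=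
  calc ∫⁻ x in ball x₀ r, g x ∂μ = ∫⁻ x in ball x₀ r, g x * μ (ball x ρ) ∂μ := by
        simp only [hρ1, mul_one]
    _ ≤ K * μ (ball x₀ (r + ρ)) := setLIntegral_ball_mul_measure_ball_le μ hg hK x₀ r
    _ ≤ K * (2 ^ finrank ℝ E * μ (ball x₀ r)) := by
        gcongr
        exact measure_ball_add_le_two_pow_mul μ (le_of_one_le_measure_ball μ hρ hρ1 hr) x₀
    _ = 2 ^ finrank ℝ E * K * μ (ball x₀ r) := by ring

theorem integral_abs_ball_le_of_unit_balls [Nontrivial E] {f : E → ℝ} (hf : LocallyIntegrable f μ)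
    {K : ℝ} (hK : 0 ≤ K)
    (H : ∀ y ρ, 0 < ρ → μ.real (ball y ρ) = 1 → ∫ x in ball y ρ, |f x| ∂μ ≤ K)
    {x₀ : E} {r : ℝ} (hr : 1 ≤ μ.real (ball x₀ r)) :
    ∫ x in ball x₀ r, |f x| ∂μ ≤ 2 ^ finrank ℝ E * K * μ.real (ball x₀ r) := by
  have hint : ∀ y s, ∫ x in ball y s, |f x| ∂μ = (∫⁻ x in ball y s, ‖f x‖ₑ ∂μ).toReal := fun y s =>
    integral_norm_eq_lintegral_enorm hf.aestronglyMeasurable.restrict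
  have hfin : ∀ y s, ∫⁻ x in ball y s, ‖f x‖ₑ ∂μ ≠ ∞ := fun y s =>
    ((hf.integrableOn_isCompact (isCompact_closedBall y s)).mono_set
      ball_subset_closedBall).hasFiniteIntegral.ne
  obtain ⟨ρ, hρ, hρ1⟩ := exists_pos_radius_measure_ball_eq_one μ
  have hunit : ∀ y, ∫⁻ x in ball y ρ, ‖f x‖ₑ ∂μ ≤ ENNReal.ofReal K := fun y => by
    rw [ENNReal.le_ofReal_iff_toReal_le (hfin y ρ) hK, ← hint]
    exact H y ρ hρ (by rw [measureReal_def, hρ1, ENNReal.toReal_one])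
  have hr' : 1 ≤ μ (ball x₀ r) := by
    rw [← ENNReal.ofReal_toReal measure_ball_lt_top.ne]; exact ENNReal.one_le_ofReal.mpr hr
  rw [hint]
  calc (∫⁻ x in ball x₀ r, ‖f x‖ₑ ∂μ).toReal
      ≤ (2 ^ finrank ℝ E * ENNReal.ofReal K * μ (ball x₀ r)).toReal :=
        ENNReal.toReal_mono (by simp [ENNReal.mul_eq_top, measure_ball_lt_top.ne])
          (setLIntegral_ball_le_of_unit_balls μ hf.aestronglyMeasurable.enorm hρ hρ1 hunit hr')
    _ = 2 ^ finrank ℝ E * K * μ.real (ball x₀ r) := by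
        simp [measureReal_def, ENNReal.toReal_mul, ENNReal.toReal_ofReal hK]

end AddHaar

section PhiP

variable {p τ : ℝ}

theorem self_div_rpow_one_sub (p : ℝ) (hτ : 0 < τ) : τ / τ ^ (1 - p) = τ ^ p := by
  rw [div_eq_iff (by positivity), ← Real.rpow_add hτ, add_sub_cancel, Real.rpow_one]

theorem phiP_le_self (p : ℝ) (hτ : 0 ≤ τ) : PhiP p τ ≤ τ :=
  div_le_self hτ (le_add_of_nonneg_right (Real.rpow_nonneg hτ _))

theorem phiP_le_rpow (p : ℝ) (hτ : 0 < τ) : PhiP p τ ≤ τ ^ p :=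
  calc PhiP p τ ≤ τ / τ ^ (1 - p) :=
        div_le_div_of_nonneg_left hτ.le (by positivity) (by linarith)
    _ = τ ^ p := self_div_rpow_one_sub p hτ

theorem half_le_phiP (hp : p ≤ 1) (hτ0 : 0 ≤ τ) (hτ1 : τ ≤ 1) : τ / 2 ≤ PhiP p τ :=
  div_le_div_of_nonneg_left hτ0 (by positivity)
    (by linarith [Real.rpow_le_one hτ0 hτ1 (sub_nonneg.2 hp)])

theorem rpow_div_two_le_phiP (hp : p ≤ 1) (hτ : 1 ≤ τ) : τ ^ p / 2 ≤ PhiP p τ := by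
  have hτ0 : 0 < τ := one_pos.trans_le hτ
  have h1 : 1 ≤ τ ^ (1 - p) := Real.one_le_rpow hτ (sub_nonneg.2 hp)
  calc τ ^ p / 2 = τ / (2 * τ ^ (1 - p)) := by
        rw [div_mul_eq_div_div_swap, self_div_rpow_one_sub p hτ0]
    _ ≤ PhiP p τ := div_le_div_of_nonneg_left hτ0.le (by positivity) (by linarith)

end PhiP

section LuxemburgIndicator

variable {p m lam : ℝ}

theorem mul_phiP_one_div_self_le_one (p : ℝ) (hm : 0 < m) : m * PhiP p (1 / m) ≤ 1 :=
  calc m * PhiP p (1 / m) ≤ m * (1 / m) := by gcongr; exact phiP_le_self p (by positivity)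
    _ = 1 := mul_one_div_cancel hm.ne'

theorem mul_phiP_one_div_rpow_le_one (hp : 0 < p) (hm : 0 < m) :
    m * PhiP p (1 / m ^ (1 / p)) ≤ 1 :=
  calc m * PhiP p (1 / m ^ (1 / p)) ≤ m * (1 / m ^ (1 / p)) ^ p := by
        gcongr; exact phiP_le_rpow p (by positivity)
    _ = 1 := by
        rw [Real.div_rpow zero_le_one (by positivity), Real.one_rpow, ← Real.rpow_mul hm.le,
          one_div_mul_cancel hp.ne', Real.rpow_one, mul_one_div_cancel hm.ne']

theorem min_le_rpow_mul_of_mul_phiP_le_one (hp0 : 0 < p) (hp1 : p ≤ 1) (hm : 0 ≤ m)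
    (hlam : 0 < lam) (h : m * PhiP p (1 / lam) ≤ 1) : min m (m ^ (1 / p)) ≤ 2 ^ (1 / p) * lam := by
  have h2 : (2 : ℝ) ≤ 2 ^ (1 / p) :=
    Real.self_le_rpow_of_one_le one_le_two (one_le_one_div hp0 hp1)
  rcases le_or_gt 1 lam with hlam1 | hlam1
  · have : m * (1 / lam / 2) ≤ 1 :=
      (mul_le_mul_of_nonneg_left (half_le_phiP hp1 (by positivity)
        ((div_le_one hlam).2 hlam1)) hm).trans h
    have hm2 : m ≤ 2 * lam := by
      field_simp at this; linarith
    exact (min_le_left _ _).trans (hm2.trans (by gcongr))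
  · have : m * ((1 / lam) ^ p / 2) ≤ 1 :=
      (mul_le_mul_of_nonneg_left (rpow_div_two_le_phiP hp1 ((one_le_div hlam).2 hlam1.le))
        hm).trans h
    have hm2 : m ≤ 2 * lam ^ p := by
      rw [Real.div_rpow zero_le_one hlam.le, Real.one_rpow] at this
      field_simp at this; linarith
    calc min m (m ^ (1 / p)) ≤ m ^ (1 / p) := min_le_right _ _
      _ ≤ (2 * lam ^ p) ^ (1 / p) := by gcongr
      _ = 2 ^ (1 / p) * lam := by
          rw [Real.mul_rpow zero_le_two (by positivity), ← Real.rpow_mul hlam.le,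
            mul_one_div_cancel hp0.ne', Real.rpow_one]

theorem integral_phiP_abs_indicator_div {α : Type*} [MeasurableSpace α] (μ : Measure α)
    {s : Set α} (hs : MeasurableSet s) (p lam : ℝ) :
    ∫ x, PhiP p (|s.indicator (fun _ => (1 : ℝ)) x| / lam) ∂μ = μ.real s * PhiP p (1 / lam) := by
  have : (fun x => PhiP p (|s.indicator (fun _ => (1 : ℝ)) x| / lam)) =
      s.indicator fun _ => PhiP p (1 / lam) := by
    ext x
    by_cases hx : x ∈ s <;> simp [hx, PhiP]
  rw [this, integral_indicator_const _ hs, smul_eq_mul]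

variable {n : ℕ} {s : Set (EuclideanSpace ℝ (Fin n))}

theorem luxNorm_indicator_eq_sInf (hs : MeasurableSet s) :
    luxNorm n p (s.indicator fun _ => 1) =
      sInf {lam | 0 < lam ∧ volume.real s * PhiP p (1 / lam) ≤ 1} := by
  simp only [luxNorm, integral_phiP_abs_indicator_div volume hs]

theorem luxNorm_nonneg (n : ℕ) (p : ℝ) (f : EuclideanSpace ℝ (Fin n) → ℝ) : 0 ≤ luxNorm n p f :=
  Real.sInf_nonneg fun _ h => h.1.le

theorem luxNorm_indicator_le_min (hp : 0 < p) (hs : MeasurableSet s) (hm : 0 < volume.real s) :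
    luxNorm n p (s.indicator fun _ => 1) ≤ min (volume.real s) (volume.real s ^ (1 / p)) := by
  have hbdd : BddBelow {lam : ℝ | 0 < lam ∧ volume.real s * PhiP p (1 / lam) ≤ 1} :=
    ⟨0, fun _ h => h.1.le⟩
  rw [luxNorm_indicator_eq_sInf hs]
  exact le_min (csInf_le hbdd ⟨hm, mul_phiP_one_div_self_le_one p hm⟩)
    (csInf_le hbdd ⟨by positivity, mul_phiP_one_div_rpow_le_one hp hm⟩)

theorem min_le_rpow_mul_luxNorm_indicator (hp0 : 0 < p) (hp1 : p ≤ 1) (hs : MeasurableSet s)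
    (hm : 0 < volume.real s) :
    min (volume.real s) (volume.real s ^ (1 / p)) ≤
      2 ^ (1 / p) * luxNorm n p (s.indicator fun _ => 1) := by
  have h2 : (0 : ℝ) < 2 ^ (1 / p) := by positivity
  rw [luxNorm_indicator_eq_sInf hs, ← div_le_iff₀' h2]
  exact le_csInf ⟨_, hm, mul_phiP_one_div_self_le_one p hm⟩ fun lam ⟨hlam, h⟩ =>
    (div_le_iff₀' h2).2 (min_le_rpow_mul_of_mul_phiP_le_one hp0 hp1 hm.le hlam h)

end LuxemburgIndicator

section CampanatoBounds

variable {n : ℕ} {p K : ℝ} {f : EuclideanSpace ℝ (Fin n) → ℝ}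

theorem CampBound.mono {K' : ℝ} (h : CampBound n p K f) (hKK' : K ≤ K') : CampBound n p K' f :=
  ⟨fun x₀ r hr hv P hP => (h.1 x₀ r hr hv P hP).trans (by gcongr),
    fun x₀ r hr hv => (h.2 x₀ r hr hv).trans (by gcongr)⟩

theorem CampBound.of_orlCampBound (hp : 0 < p) (hK : 0 ≤ K) (h : OrlCampBound n p K f) :
    CampBound n p K f := by
  have key : ∀ (x₀ : EuclideanSpace ℝ (Fin n)) (r : ℝ), 0 < r →
      K * luxNorm n p ((ball x₀ r).indicator fun _ => 1) ≤
        K * (volume (ball x₀ r)).toReal ^ (1 / p) := fun x₀ r hr => by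
    gcongr
    exact (luxNorm_indicator_le_min hp measurableSet_ball (measureReal_ball_pos volume x₀ hr)).trans
      (min_le_right _ _)
  exact ⟨fun x₀ r hr hv P hP => (h.1 x₀ r hr hv P hP).trans (key x₀ r hr),
    fun x₀ r hr hv => (h.2 x₀ r hr hv).trans (key x₀ r hr)⟩

theorem OrlCampBound.of_campBound (hn : 0 < n) (hp0 : 0 < p) (hp1 : p ≤ 1)
    (hf : LocallyIntegrable f) (hK : 0 ≤ K) (h : CampBound n p K f) :
    OrlCampBound n p (2 ^ (1 / p) * 2 ^ n * K) f := by
  have : Nonempty (Fin n) := ⟨⟨0, hn⟩⟩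
  have hip : 1 ≤ 1 / p := one_le_one_div hp0 hp1
  have hlux : ∀ (x₀ : EuclideanSpace ℝ (Fin n)) (r : ℝ), 0 < r →
      min (volume.real (ball x₀ r)) (volume.real (ball x₀ r) ^ (1 / p)) ≤
        2 ^ (1 / p) * luxNorm n p ((ball x₀ r).indicator fun _ => 1) := fun x₀ r hr =>
    min_le_rpow_mul_luxNorm_indicator hp0 hp1 measurableSet_ball (measureReal_ball_pos volume x₀ hr)
  constructor
  · intro x₀ r hr hv P hP
    have hmin : min (volume.real (ball x₀ r)) (volume.real (ball x₀ r) ^ (1 / p)) =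
        volume.real (ball x₀ r) ^ (1 / p) :=
      min_eq_right (Real.rpow_le_self_of_le_one ENNReal.toReal_nonneg hv.le hip)
    calc ∫ x in ball x₀ r, |f x - mvEval x P| ≤ K * volume.real (ball x₀ r) ^ (1 / p) :=
          h.1 x₀ r hr hv P hP
      _ ≤ K * (2 ^ (1 / p) * luxNorm n p ((ball x₀ r).indicator fun _ => 1)) := by
          rw [← hmin]; gcongr; exact hlux x₀ r hr
      _ ≤ 2 ^ n * (K * (2 ^ (1 / p) * luxNorm n p ((ball x₀ r).indicator fun _ => 1))) :=
          le_mul_of_one_le_left (mul_nonneg hK (mul_nonneg (by positivity) (luxNorm_nonneg _ _ _)))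
            (one_le_pow₀ one_le_two)
      _ = 2 ^ (1 / p) * 2 ^ n * K * luxNorm n p ((ball x₀ r).indicator fun _ => 1) := by ring
  · intro x₀ r hr hv
    have hunit : ∀ y ρ, 0 < ρ → (volume (ball y ρ)).toReal = 1 →
        ∫ x in ball y ρ, |f x| ≤ K := fun y ρ hρ h1 => by
      simpa [h1] using h.2 y ρ hρ h1.ge
    have hmin : min (volume.real (ball x₀ r)) (volume.real (ball x₀ r) ^ (1 / p)) =
        volume.real (ball x₀ r) :=
      min_eq_left (Real.self_le_rpow_of_one_le hv hip)
    calc ∫ x in ball x₀ r, |f x| ≤ 2 ^ n * K * volume.real (ball x₀ r) := by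
          simpa [finrank_euclideanSpace_fin] using
            integral_abs_ball_le_of_unit_balls volume hf hK hunit hv
      _ ≤ 2 ^ n * K * (2 ^ (1 / p) * luxNorm n p ((ball x₀ r).indicator fun _ => 1)) := by
          rw [← hmin]; gcongr; exact hlux x₀ r hr
      _ = 2 ^ (1 / p) * 2 ^ n * K * luxNorm n p ((ball x₀ r).indicator fun _ => 1) := by ring

end CampanatoBounds

/-- Let `p ∈ (0,1)`, `α = 1/p − 1`, `d = ⌊nα⌋`. The spaces `L_loc^{Φ_p,1,d}(ℝⁿ)` and
`L_loc^{α,1,d}(ℝⁿ)` coincide with equivalent norms: each membership bound implies the other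
up to a uniform constant `C` (the converse direction uses the identification
`L_loc^{α,1,d}(ℝⁿ) = Λ_{nα}(ℝⁿ)`, whose elements are bounded). -/
theorem stmt_15 (n : ℕ) (hn : 0 < n) (p : ℝ) (hp : p ∈ Set.Ioo (0 : ℝ) 1) :
    ∃ C > (0 : ℝ), ∀ f : EuclideanSpace ℝ (Fin n) → ℝ, LocallyIntegrable f →
      (∀ K : ℝ, 0 ≤ K → OrlCampBound n p K f → CampBound n p (C * K) f) ∧
      (∀ K : ℝ, 0 ≤ K → CampBound n p K f → OrlCampBound n p (C * K) f) := by
  obtain ⟨hp0, hp1⟩ := hp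
  have hC : 1 ≤ (2 : ℝ) ^ (1 / p) * 2 ^ n :=
    one_le_mul_of_one_le_of_one_le (Real.one_le_rpow one_le_two (by positivity))
      (one_le_pow₀ one_le_two)
  refine ⟨2 ^ (1 / p) * 2 ^ n, by positivity, fun f hf => ⟨fun K hK h => ?_, fun K hK h => ?_⟩⟩
  · exact (CampBound.of_orlCampBound hp0 hK h).mono (le_mul_of_one_le_left hK hC)
  · exact OrlCampBound.of_campBound hn hp0 hp1.le hf hK h
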